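/- arXiv:2301.12474 — 2 statements merged into one kernel-verified Lean document; each statement's English description precedes it below -/
import Mathlib

section
/- Let ρ(z) = (z+1)^{1+β} - z^{1+β} - 1 with 0 < β < 1, and let r_*(y) = ((2^β - 1)ρ(y)/(ρ(2y) - ρ(y)))^{1/(1-β)}. Then for all y > 0 and all x with r_*(y) ≤ x < 1, one has ρ(x)/(2x) < (ρ(xy+y) - ρ(y))/(x ρ(y)). -/
/-!
Write `ρ = rho β`, a strictly increasing, strictly concave function on `[0, ∞)` with `ρ 0 = 0`.
Strict concavity on the segment `[y, 2y]` gives `ρ(xy + y) - ρ(y) > x (ρ(2y) - ρ(y))`, and the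
hypothesis `x ≥ r_*(y)` unwinds to `x (ρ(2y) - ρ(y)) ≥ (2^β - 1) ρ(y) x^β`. It remains to see
`ρ(x) ≤ ρ(1) x^β = 2 (2^β - 1) x^β` for `0 < x ≤ 1`: this follows from the scaling identity
`ρ(x) = x^{1+β} ρ(1/x)` together with `x ρ(1/x) ≤ ρ(1)`, which is concavity and `ρ 0 = 0`.
-/

open Real Set

theorem ConcaveOn.mul_le_map_mul {f : ℝ → ℝ} (hf : ConcaveOn ℝ (Ici 0) f) (hf0 : f 0 = 0)
    {t z : ℝ} (ht0 : 0 ≤ t) (ht1 : t ≤ 1) (hz : 0 ≤ z) : t * f z ≤ f (t * z) := by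
  have h := hf.2 (self_mem_Ici : (0 : ℝ) ∈ Ici 0) (mem_Ici.2 hz) (sub_nonneg.2 ht1) ht0
    (sub_add_cancel 1 t)
  simpa [hf0] using h

theorem StrictConcaveOn.mul_sub_lt_sub {s : Set ℝ} {f : ℝ → ℝ} (hf : StrictConcaveOn ℝ s f)
    {a b t : ℝ} (ha : a ∈ s) (hb : b ∈ s) (hab : a ≠ b) (ht0 : 0 < t) (ht1 : t < 1) :
    t * (f b - f a) < f (a + t * (b - a)) - f a := by
  have h := hf.2 ha hb hab (sub_pos.2 ht1) ht0 (sub_add_cancel 1 t)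
  rw [smul_eq_mul, smul_eq_mul, smul_eq_mul, smul_eq_mul,
    show (1 - t) * a + t * b = a + t * (b - a) by ring] at h
  linarith

theorem mul_rpow_le_mul_of_div_rpow_inv_le {a d x β : ℝ} (ha : 0 ≤ a) (hd : 0 < d) (hx : 0 < x)
    (hβ : β < 1) (h : (a / d) ^ (1 - β)⁻¹ ≤ x) : a * x ^ β ≤ x * d := by
  have h' := (div_le_iff₀ hd).1 ((rpow_inv_le_iff_of_pos (by positivity) hx.le (by linarith)).1 h)
  calc a * x ^ β ≤ x ^ (1 - β) * d * x ^ β := mul_le_mul_of_nonneg_right h' (rpow_nonneg hx.le β)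
    _ = x * d := by rw [mul_right_comm, ← rpow_add hx, sub_add_cancel, rpow_one]

noncomputable def rho (β z : ℝ) : ℝ := (z + 1) ^ (1 + β) - z ^ (1 + β) - 1

section rho

variable {β : ℝ}

theorem hasDerivAt_rho (hβ : 0 ≤ β) (z : ℝ) :
    HasDerivAt (rho β) ((1 + β) * ((z + 1) ^ β - z ^ β)) z := by
  have hp : 1 ≤ 1 + β := by linarith
  have h := (((hasDerivAt_rpow_const (Or.inr hp)).comp_add_const z 1).sub
    (hasDerivAt_rpow_const (Or.inr hp))).sub_const 1
  rw [add_sub_cancel_left, ← mul_sub] at h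
  exact h

theorem continuous_rho (hβ : 0 ≤ β) : Continuous (rho β) :=
  continuous_iff_continuousAt.2 fun z => (hasDerivAt_rho hβ z).continuousAt

theorem rho_zero (hβ : 0 ≤ β) : rho β 0 = 0 := by
  simp [rho, zero_rpow (by linarith : (1 : ℝ) + β ≠ 0)]

theorem rho_one : rho β 1 = 2 * (2 ^ β - 1) := by
  rw [rho, one_add_one_eq_two, one_rpow, rpow_add two_pos, rpow_one]
  ring

theorem rho_eq_rpow_mul_rho_inv {x : ℝ} (hx : 0 < x) : rho β x = x ^ (1 + β) * rho β x⁻¹ := by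
  have hinv : x * (x⁻¹ + 1) = x + 1 := by field_simp; ring
  rw [rho, rho, mul_sub, mul_sub, mul_one, ← mul_rpow hx.le (by positivity), hinv,
    ← mul_rpow hx.le (inv_nonneg.2 hx.le), mul_inv_cancel₀ hx.ne', one_rpow]
  ring

theorem strictMonoOn_rho (hβ : 0 < β) : StrictMonoOn (rho β) (Ici 0) := by
  refine strictMonoOn_of_deriv_pos (convex_Ici 0) (continuous_rho hβ.le).continuousOn
    fun z hz => ?_
  rw [interior_Ici] at hz
  rw [(hasDerivAt_rho hβ.le z).deriv]
  exact mul_pos (by linarith) (sub_pos.2 (rpow_lt_rpow (le_of_lt hz) (lt_add_one z) hβ))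

theorem rho_pos (hβ : 0 < β) {y : ℝ} (hy : 0 < y) : 0 < rho β y := by
  simpa [rho_zero hβ.le] using strictMonoOn_rho hβ self_mem_Ici (mem_Ici.2 hy.le) hy

theorem strictConcaveOn_rho (hβ0 : 0 < β) (hβ1 : β < 1) : StrictConcaveOn ℝ (Ici 0) (rho β) := by
  refine strictConcaveOn_of_deriv2_neg (convex_Ici 0) (continuous_rho hβ0.le).continuousOn
    fun z hz => ?_
  rw [interior_Ici] at hz
  have hz : 0 < z := hz
  have hderiv : deriv (rho β) = fun z => (1 + β) * ((z + 1) ^ β - z ^ β) :=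
    funext fun z => (hasDerivAt_rho hβ0.le z).deriv
  have hderiv2 : HasDerivAt (fun z => (1 + β) * ((z + 1) ^ β - z ^ β))
      ((1 + β) * (β * (z + 1) ^ (β - 1) - β * z ^ (β - 1))) z :=
    (((hasDerivAt_rpow_const (Or.inl (by linarith))).comp_add_const z 1).sub
      (hasDerivAt_rpow_const (Or.inl hz.ne'))).const_mul (1 + β)
  show deriv (deriv (rho β)) z < 0
  rw [hderiv, hderiv2.deriv]
  have hlt : (z + 1) ^ (β - 1) < z ^ (β - 1) := rpow_lt_rpow_of_neg hz (by linarith) (by linarith)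
  have hcoef : 0 < (1 + β) * β := by positivity
  nlinarith

theorem rho_le_rho_one_mul_rpow (hβ0 : 0 < β) (hβ1 : β < 1) {x : ℝ} (hx0 : 0 < x) (hx1 : x ≤ 1) :
    rho β x ≤ rho β 1 * x ^ β := by
  have hscale : x * rho β x⁻¹ ≤ rho β 1 := by
    simpa [mul_inv_cancel₀ hx0.ne'] using (strictConcaveOn_rho hβ0 hβ1).concaveOn.mul_le_map_mul
      (rho_zero hβ0.le) hx0.le hx1 (inv_nonneg.2 hx0.le)
  calc rho β x = x ^ β * (x * rho β x⁻¹) := by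
        rw [rho_eq_rpow_mul_rho_inv hx0, rpow_one_add' hx0.le (by linarith)]
        ring
    _ ≤ x ^ β * rho β 1 := mul_le_mul_of_nonneg_left hscale (rpow_nonneg hx0.le β)
    _ = rho β 1 * x ^ β := mul_comm _ _

end rho

/-- With `ρ(z) = (z+1)^{1+β} - z^{1+β} - 1` and
`r_*(y) = ((2^β - 1)ρ(y)/(ρ(2y) - ρ(y)))^{1/(1-β)}`, for `y > 0` and `r_*(y) ≤ x < 1`,
`ρ(x)/(2x) < (ρ(xy+y) - ρ(y))/(x ρ(y))`. -/
theorem rho_rstar_ineq (β : ℝ) (hβ0 : 0 < β) (hβ1 : β < 1)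
    (ρ rstar : ℝ → ℝ)
    (hρ : ∀ z : ℝ, ρ z = (z + 1) ^ (1 + β) - z ^ (1 + β) - 1)
    (hr : ∀ y : ℝ,
      rstar y = (((2 : ℝ) ^ β - 1) * ρ y / (ρ (2 * y) - ρ y)) ^ (1 / (1 - β)))
    (x y : ℝ) (hy : 0 < y) (hx1 : rstar y ≤ x) (hx2 : x < 1) :
    ρ x / (2 * x) < (ρ (x * y + y) - ρ y) / (x * ρ y) := by
  obtain rfl : ρ = rho β := funext hρ
  rw [hr y, one_div] at hx1
  have hρy := rho_pos hβ0 hy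
  have hgap : 0 < rho β (2 * y) - rho β y :=
    sub_pos.2 (strictMonoOn_rho hβ0 (mem_Ici.2 hy.le) (mem_Ici.2 (by linarith)) (by linarith))
  have h2β : 0 < (2 : ℝ) ^ β - 1 := sub_pos.2 (one_lt_rpow one_lt_two hβ0)
  have hx0 : 0 < x := (rpow_pos_of_pos (div_pos (mul_pos h2β hρy) hgap) _).trans_le hx1
  have hthreshold : ((2 : ℝ) ^ β - 1) * rho β y * x ^ β ≤ x * (rho β (2 * y) - rho β y) :=
    mul_rpow_le_mul_of_div_rpow_inv_le (mul_pos h2β hρy).le hgap hx0 hβ1 hx1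
  have hchord : x * (rho β (2 * y) - rho β y) < rho β (x * y + y) - rho β y := by
    have h := (strictConcaveOn_rho hβ0 hβ1).mul_sub_lt_sub (mem_Ici.2 hy.le)
      (mem_Ici.2 (by linarith : (0 : ℝ) ≤ 2 * y)) (by linarith) hx0 hx2
    rwa [show y + x * (2 * y - y) = x * y + y by ring] at h
  have hsmall := rho_le_rho_one_mul_rpow hβ0 hβ1 hx0 hx2.le
  rw [rho_one] at hsmall
  rw [div_lt_div_iff₀ (by positivity) (by positivity)]
  nlinarith [mul_le_mul_of_nonneg_right hsmall hρy.le]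
end

section
/- If the positive kernels a^{(n)}_j are monotonically decreasing in the subscript index j (a^{(n)}_{j-1} > a^{(n)}_j > 0 for 1 ≤ j ≤ n-1), then the associated DCC kernels satisfy p^{(n)}_{n-k} ≥ 0 for all 1 ≤ k ≤ n. -/
/-!
By DOC orthogonality, `q_j = p^{(n)}_{n-j}` solves the lower-triangular system
`∑_{j=k}^{n} q_j a^{(j)}_{j-k} = 1` (`1 ≤ k ≤ n`). Solve it from `k = n` downwards:
`q_k a^{(k)}_0 = 1 - ∑_{j>k} q_j a^{(j)}_{j-k}`, and once the later `q_j` are nonnegative,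
monotonicity `a^{(j)}_{j-k} ≤ a^{(j)}_{j-k-1}` bounds this tail by the left side of the
`(k+1)`-st equation, which is `1`.
-/

open Finset

section Identities

variable {K : Type*} [Field K] {a θ : ℕ → ℕ → K}

lemma DOC_orthogonal (ha0 : ∀ k, 1 ≤ k → a k 0 ≠ 0)
    (hθ0 : ∀ n : ℕ, 1 ≤ n → θ n 0 = 1 / a n 0)
    (hθ : ∀ n k : ℕ, 1 ≤ k → k ≤ n - 1 →
      θ n (n - k) = -(1 / a k 0) * ∑ j ∈ Icc (k + 1) n, θ n (n - j) * a j (j - k))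
    {i k : ℕ} (hk : 1 ≤ k) (hki : k ≤ i) :
    ∑ j ∈ Icc k i, θ i (i - j) * a j (j - k) = if i = k then 1 else 0 := by
  obtain rfl | hlt := hki.eq_or_lt
  · simp [hθ0 k hk, ha0 k hk]
  · rw [if_neg hlt.ne', ← insert_Icc_add_one_left_eq_Icc hki, sum_insert (by simp),
      hθ i k hk (by omega), Nat.sub_self]
    field_simp [ha0 k hk]
    ring

lemma DCC_complementary {p : ℕ → ℕ → K} (ha0 : ∀ k, 1 ≤ k → a k 0 ≠ 0)
    (hθ0 : ∀ n : ℕ, 1 ≤ n → θ n 0 = 1 / a n 0)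
    (hθ : ∀ n k : ℕ, 1 ≤ k → k ≤ n - 1 →
      θ n (n - k) = -(1 / a k 0) * ∑ j ∈ Icc (k + 1) n, θ n (n - j) * a j (j - k))
    (hp : ∀ n k : ℕ, 1 ≤ k → k ≤ n → p n (n - k) = ∑ j ∈ Icc k n, θ j (j - k))
    {n k : ℕ} (hk : 1 ≤ k) (hkn : k ≤ n) :
    ∑ j ∈ Icc k n, p n (n - j) * a j (j - k) = 1 := calc
  _ = ∑ j ∈ Icc k n, ∑ i ∈ Icc j n, θ i (i - j) * a j (j - k) :=
      sum_congr rfl fun j hj => by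
        rw [mem_Icc] at hj
        rw [hp n j (hk.trans hj.1) hj.2, sum_mul]
  _ = ∑ i ∈ Icc k n, ∑ j ∈ Icc k i, θ i (i - j) * a j (j - k) :=
      sum_comm' fun j i => by simp only [mem_Icc]; omega
  _ = ∑ i ∈ Icc k n, if i = k then 1 else 0 :=
      sum_congr rfl fun i hi => DOC_orthogonal ha0 hθ0 hθ hk (mem_Icc.mp hi).1
  _ = 1 := by simp [hkn]

end Identities

section Positivity

variable {K : Type*} [Field K] [LinearOrder K] [IsStrictOrderedRing K] {a : ℕ → ℕ → K}
  {q : ℕ → K} {n : ℕ}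

lemma sum_Icc_add_one_mul_le_one (hmono : ∀ j i, 1 ≤ i → i ≤ j - 1 → a j i ≤ a j (i - 1))
    (hsum : ∀ k, 1 ≤ k → k ≤ n → ∑ j ∈ Icc k n, q j * a j (j - k) = 1)
    {k : ℕ} (hk : 1 ≤ k) (hq : ∀ j ∈ Icc (k + 1) n, 0 ≤ q j) :
    ∑ j ∈ Icc (k + 1) n, q j * a j (j - k) ≤ 1 := by
  rcases le_or_gt n k with hnk | hkn
  · simp [Icc_eq_empty_of_lt (Nat.lt_succ_of_le hnk)]
  calc ∑ j ∈ Icc (k + 1) n, q j * a j (j - k)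
      ≤ ∑ j ∈ Icc (k + 1) n, q j * a j (j - (k + 1)) := sum_le_sum fun j hj => by
        rw [mem_Icc] at hj
        have h := hmono j (j - k) (by omega) (by omega)
        rw [show j - k - 1 = j - (k + 1) by omega] at h
        exact mul_le_mul_of_nonneg_left h (hq j (mem_Icc.mpr hj))
    _ = 1 := hsum (k + 1) (by omega) hkn

lemma nonneg_of_sum_mul_eq_one (ha0 : ∀ k, 1 ≤ k → 0 < a k 0)
    (hmono : ∀ j i, 1 ≤ i → i ≤ j - 1 → a j i ≤ a j (i - 1))
    (hsum : ∀ k, 1 ≤ k → k ≤ n → ∑ j ∈ Icc k n, q j * a j (j - k) = 1)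
    {k : ℕ} (hk : 1 ≤ k) (hkn : k ≤ n) : 0 ≤ q k := by
  induction h : n - k using Nat.strong_induction_on generalizing k with
  | _ m ih =>
    have hq : ∀ j ∈ Icc (k + 1) n, 0 ≤ q j := fun j hj => by
      rw [mem_Icc] at hj
      exact ih (n - j) (by omega) (by omega) hj.2 rfl
    have hdiag : q k * a k 0 = 1 - ∑ j ∈ Icc (k + 1) n, q j * a j (j - k) := by
      rw [eq_sub_iff_add_eq, ← hsum k hk hkn, ← insert_Icc_add_one_left_eq_Icc hkn,
        sum_insert (by simp), Nat.sub_self]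
    have htail := sum_Icc_add_one_mul_le_one hmono hsum hk hq
    exact (mul_nonneg_iff_of_pos_right (ha0 k hk)).mp (by rw [hdiag]; linarith)

end Positivity

/-- If the positive kernels `a^{(n)}_j` are monotonically decreasing in the subscript
index `j`, then the associated DCC kernels satisfy `p^{(n)}_{n-k} ≥ 0`. -/
theorem DCC_nonneg (a θ p : ℕ → ℕ → ℝ)
    (hapos : ∀ n j : ℕ, 1 ≤ n → j ≤ n - 1 → 0 < a n j)
    (hadec : ∀ n j : ℕ, 1 ≤ j → j ≤ n - 1 → a n j < a n (j - 1))
    (hθ0 : ∀ n : ℕ, 1 ≤ n → θ n 0 = 1 / a n 0)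
    (hθ : ∀ n k : ℕ, 1 ≤ k → k ≤ n - 1 →
      θ n (n - k) = -(1 / a k 0) * ∑ j ∈ Finset.Icc (k + 1) n, θ n (n - j) * a j (j - k))
    (hp : ∀ n k : ℕ, 1 ≤ k → k ≤ n →
      p n (n - k) = ∑ j ∈ Finset.Icc k n, θ j (j - k))
    (n k : ℕ) (hk : 1 ≤ k) (hkn : k ≤ n) :
    0 ≤ p n (n - k) := by
  have ha0 : ∀ k, 1 ≤ k → 0 < a k 0 := fun k hk => hapos k 0 hk (Nat.zero_le _)
  exact nonneg_of_sum_mul_eq_one (q := fun j => p n (n - j)) ha0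
    (fun j i hi hij => (hadec j i hi hij).le)
    (fun k hk hkn => DCC_complementary (fun k hk => (ha0 k hk).ne') hθ0 hθ hp hk hkn) hk hkn
end
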